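/- Let A be an associative conformal algebra. For any f ∈ C^m(A,A), g ∈ C^n(A,A), h ∈ C^p(A,A) with m, n, p ≥ 1, the following identity of cochains holds: (f ⊔ g) • h = (f • h) ⊔ g + (−1)^{m(p−1)} f ⊔ (g • h). -/

import Mathlib

open Finset

/-!
Framework for the Hochschild cohomology of an associative conformal algebra over a
field `k` of characteristic zero.

Polynomials with coefficients in a `k`-vector space `A` are represented by their
associated polynomial functions (this is faithful since a characteristic zero field is
infinite).  A conformal `n`-cochain (a conformal sesquilinear map
`A^{⊗ n} → A[λ₁, …, λ_{n-1}]`) is represented by a function taking a family of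
λ-values `ℕ → k` and a family of arguments `ℕ → A`, only an initial segment of which
is relevant.
-/

/-- Raw carriers for conformal polylinear maps: a family of λ-parameters and a family
of arguments (only an initial segment of each is relevant). -/
abbrev CMap (k : Type*) (A : Type*) : Type _ := (ℕ → k) → (ℕ → A) → A

variable {k : Type*} [Field k]
variable {A : Type*} [AddCommGroup A] [Module k A]

/-- `F` is a polynomial function of the first `m` λ-variables. -/
def IsPolyIn (m : ℕ) (F : (ℕ → k) → A) : Prop :=
  ∃ (N : ℕ) (c : (Fin m → Fin N) → A),
    ∀ lam : ℕ → k, F lam = ∑ α : Fin m → Fin N, (∏ r : Fin m, lam r.1 ^ (α r).1) • c α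

/-- One-variable polynomial functions `k → A`. -/
def IsPolyFun (F : k → A) : Prop :=
  ∃ c : ℕ →₀ A, ∀ x : k, F x = c.sum fun j v => x ^ j • v

/-- The coefficients of a one-variable polynomial function (via choice; the
coefficients are uniquely determined since `k` is infinite). -/
noncomputable def polyCoeffs (F : k → A) : ℕ →₀ A :=
  letI := Classical.propDecidable (IsPolyFun F)
  if h : IsPolyFun F then h.choose else 0

/-- Evaluation of a polynomial function `F(λ)` at `λ = -∂`, where `∂ = D`. -/
noncomputable def evalNegD (D : A →ₗ[k] A) (F : k → A) : A :=
  (polyCoeffs F).sum fun j v => ((-1 : ℤ) ^ j) • (D ^ j) v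

/-- An associative conformal algebra structure on the `k[∂]`-module `(A, D)`, with the
λ-product in the polynomial-function representation. -/
structure AssocConfAlg (k : Type*) (A : Type*) [Field k] [AddCommGroup A] [Module k A] where
  /-- the action of `∂` -/
  D : A →ₗ[k] A
  /-- the λ-product `(a, b, λ) ↦ a_λ b` -/
  mul : A → A → k → A
  add_left : ∀ a b c lam, mul (a + b) c lam = mul a c lam + mul b c lam
  smul_left : ∀ (r : k) a c lam, mul (r • a) c lam = r • mul a c lam
  add_right : ∀ a b c lam, mul a (b + c) lam = mul a b lam + mul a c lam
  smul_right : ∀ (r : k) a c lam, mul a (r • c) lam = r • mul a c lam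
  poly : ∀ a b, IsPolyFun fun lam => mul a b lam
  D_left : ∀ a b lam, mul (D a) b lam = -(lam • mul a b lam)
  D_right : ∀ a b lam, mul a (D b) lam = D (mul a b lam) + lam • mul a b lam
  assoc : ∀ a b c lam mu, mul (mul a b lam) c (lam + mu) = mul a (mul b c mu) lam

/-- `φ ∈ U_m`: a conformal sesquilinear map with `m` λ-variables and `m + 1`
arguments; `U_{n-1}` is the space `C^n` of Hochschild `n`-cochains, `n ≥ 1`. -/
structure IsU (D : A →ₗ[k] A) (m : ℕ) (φ : CMap k A) : Prop where
  depends : ∀ lam lam' a a', (∀ r, r < m → lam r = lam' r) →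
      (∀ r, r < m + 1 → a r = a' r) → φ lam a = φ lam' a'
  map_add : ∀ lam a i, i < m + 1 → ∀ x y : A,
      φ lam (Function.update a i (x + y))
        = φ lam (Function.update a i x) + φ lam (Function.update a i y)
  map_smul : ∀ lam a i, i < m + 1 → ∀ (r : k) (x : A),
      φ lam (Function.update a i (r • x)) = r • φ lam (Function.update a i x)
  poly : ∀ a, IsPolyIn m fun lam => φ lam a
  sesq : ∀ lam a i, i < m → ∀ x : A,
      φ lam (Function.update a i (D x)) = -(lam i • φ lam (Function.update a i x))
  sesq_last : ∀ lam a (x : A),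
      φ lam (Function.update a m (D x))
        = D (φ lam (Function.update a m x))
          + (∑ j ∈ Finset.range m, lam j) • φ lam (Function.update a m x)

/-- `f •ᵢ g`: insertion of `g ∈ U_n` into `f` at position `i`. -/
def bulletAt (n i : ℕ) (f g : CMap k A) : CMap k A := fun lam a =>
  f (fun r => if r < i then lam r
      else if r = i then ∑ t ∈ Finset.range (n + 1), lam (i + t)
      else lam (r + n))
    (fun r => if r < i then a r
      else if r = i then g (fun t => lam (i + t)) (fun t => a (i + t))
      else a (r + n))

/-- `f • g = ∑_{i=0}^{m} (-1)^{n i} f •ᵢ g` for `f ∈ U_m`, `g ∈ U_n`. -/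
def bullet (m n : ℕ) (f g : CMap k A) : CMap k A := fun lam a =>
  ∑ i ∈ Finset.range (m + 1), ((-1 : ℤ) ^ (n * i)) • bulletAt n i f g lam a

/-- The graded commutator `[f, g] = f • g - (-1)^{mn} g • f` for `f ∈ U_m`, `g ∈ U_n`. -/
def cbracketU (m n : ℕ) (f g : CMap k A) : CMap k A := fun lam a =>
  bullet m n f g lam a - ((-1 : ℤ) ^ (m * n)) • bullet n m g f lam a

/-- The degree `-1` bracket `[f, g] = f • g - (-1)^{(m-1)(n-1)} g • f` on cochains,
for `f ∈ C^m = U_{m-1}`, `g ∈ C^n = U_{n-1}` (`m, n ≥ 1`). -/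
def gbracket (m n : ℕ) (f g : CMap k A) : CMap k A :=
  cbracketU (m - 1) (n - 1) f g

/-- The cup product `f ⊔ g` of `f ∈ C^m` (`m ≥ 1`) with `g ∈ C^n`. -/
def cup (mul : A → A → k → A) (m : ℕ) (f g : CMap k A) : CMap k A := fun lam a =>
  mul (f lam a) (g (fun r => lam (r + m)) (fun r => a (r + m))) (∑ j ∈ Finset.range m, lam j)

/-- The Hochschild differential `d_n : C^n → C^{n+1}` (`n ≥ 1`). -/
def hdiff (mul : A → A → k → A) (n : ℕ) (φ : CMap k A) : CMap k A := fun lam a =>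
  mul (a 0) (φ (fun r => lam (r + 1)) (fun r => a (r + 1))) (lam 0)
    + ∑ i ∈ Finset.range n, ((-1 : ℤ) ^ (i + 1)) •
        φ (fun r => if r < i then lam r else if r = i then lam i + lam (i + 1) else lam (r + 1))
          (fun r => if r < i then a r
            else if r = i then mul (a i) (a (i + 1)) (lam i)
            else a (r + 1))
    + ((-1 : ℤ) ^ (n + 1)) • mul (φ lam a) (a n) (∑ j ∈ Finset.range n, lam j)

/-- The Hochschild differential `d_0 : C^0 = A/∂A → C^1` on representatives:
`d_0(b)(a) = a_{-∂} b - b_0 a`. -/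
noncomputable def hdiff0 (D : A →ₗ[k] A) (mul : A → A → k → A) (b : A) : CMap k A :=
  fun _lam a => evalNegD D (fun x => mul (a 0) b x) - mul b (a 0) 0

/-- `f • b` for `f ∈ C^m` (`m ≥ 1`) and `b` a representative of an element of
`C^0 = A/∂A`. -/
noncomputable def bullet0 (D : A →ₗ[k] A) (m : ℕ) (f : CMap k A) (b : A) : CMap k A :=
  fun lam a =>
    (∑ i ∈ Finset.range (m - 1), ((-1 : ℤ) ^ i) •
        f (fun r => if r < i then lam r else if r = i then 0 else lam (r - 1))
          (fun r => if r < i then a r else if r = i then b else a (r - 1)))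
      + ((-1 : ℤ) ^ (m - 1)) •
          evalNegD D (fun x =>
            f (fun r => if r = m - 2 then x else lam r)
              (fun r => if r = m - 1 then b else a r))

/-- `b ⊔ g = b ∘₀ g(…)` for `b ∈ C^0`, `g ∈ C^n`. -/
def cup0L (mul : A → A → k → A) (b : A) (g : CMap k A) : CMap k A :=
  fun lam a => mul b (g lam a) 0

/-- `f ⊔ b = f(…) ∘_{-∂} b` for `f ∈ C^m`, `b ∈ C^0`. -/
noncomputable def cup0R (D : A →ₗ[k] A) (mul : A → A → k → A) (f : CMap k A) (b : A) :
    CMap k A :=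
  fun lam a => evalNegD D (fun x => mul (f lam a) b x)

/-- `b ⊔ b' = b ∘_{-∂} b'` for `b, b' ∈ C^0`. -/
noncomputable def cup00 (D : A →ₗ[k] A) (mul : A → A → k → A) (b b' : A) : A :=
  evalNegD D (fun x => mul b b' x)

/-- Hochschild coboundaries in `C^n`. -/
def IsCoboundary (D : A →ₗ[k] A) (mul : A → A → k → A) : ℕ → CMap k A → Prop
  | 0, _ => False
  | 1, φ => ∃ b : A, φ = hdiff0 D mul b
  | (m + 2), φ => ∃ ψ : CMap k A, IsU D m ψ ∧ φ = hdiff mul (m + 1) ψ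

/-- The λ-multiplication of `A`, viewed as a `2`-cochain `ρ ∈ C²(A, A) = U₁`. -/
def rhoOf (S : AssocConfAlg k A) : CMap k A := fun lam a => S.mul (a 0) (a 1) (lam 0)


section AuxLemmas

variable {k A : Type*} [Field k] [AddCommGroup A] [Module k A]

/-- Left multiplication as an additive monoid hom. -/
def AssocConfAlg.mulLeftHom (S : AssocConfAlg k A) (c : A) (lam : k) : A →+ A where
  toFun x := S.mul x c lam
  map_zero' := by have h := S.smul_left 0 0 c lam; simpa using h
  map_add' x y := S.add_left x y c lam

/-- Right multiplication as an additive monoid hom. -/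
def AssocConfAlg.mulRightHom (S : AssocConfAlg k A) (x : A) (lam : k) : A →+ A where
  toFun c := S.mul x c lam
  map_zero' := by have h := S.smul_right 0 x 0 lam; simpa using h
  map_add' c d := S.add_right x c d lam

theorem AssocConfAlg.mul_sum_left (S : AssocConfAlg k A) {ι : Type*} (s : Finset ι)
    (F : ι → A) (c : A) (lam : k) :
    S.mul (∑ i ∈ s, F i) c lam = ∑ i ∈ s, S.mul (F i) c lam :=
  map_sum (S.mulLeftHom c lam) F s

theorem AssocConfAlg.mul_sum_right (S : AssocConfAlg k A) {ι : Type*} (s : Finset ι)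
    (F : ι → A) (x : A) (lam : k) :
    S.mul x (∑ i ∈ s, F i) lam = ∑ i ∈ s, S.mul x (F i) lam :=
  map_sum (S.mulRightHom x lam) F s

theorem AssocConfAlg.mul_zsmul_left (S : AssocConfAlg k A) (z : ℤ) (x c : A) (lam : k) :
    S.mul (z • x) c lam = z • S.mul x c lam :=
  map_zsmul (S.mulLeftHom c lam) z x

theorem AssocConfAlg.mul_zsmul_right (S : AssocConfAlg k A) (z : ℤ) (x c : A) (lam : k) :
    S.mul x (z • c) lam = z • S.mul x c lam :=
  map_zsmul (S.mulRightHom x lam) z c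

theorem key_sum {β : Type*} [AddCommMonoid β] (G lam : ℕ → β) (i q M : ℕ)
    (h1 : ∀ j, j < i → G j = lam j)
    (h2 : G i = ∑ t ∈ Finset.range q, lam (i + t))
    (h3 : ∀ t, G (i + 1 + t) = lam (i + q + t)) :
    ∑ j ∈ Finset.range (i + 1 + M), G j = ∑ j ∈ Finset.range (i + q + M), lam j := by
  have e1 : ∑ j ∈ Finset.range i, G j = ∑ j ∈ Finset.range i, lam j :=
    Finset.sum_congr rfl fun j hj => h1 j (Finset.mem_range.mp hj)
  have e3 : ∑ t ∈ Finset.range M, G (i + 1 + t) = ∑ t ∈ Finset.range M, lam (i + q + t) :=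
    Finset.sum_congr rfl fun t _ => h3 t
  rw [Finset.sum_range_add, Finset.sum_range_succ, Finset.sum_range_add,
    Finset.sum_range_add, e1, h2, e3]

theorem AssocConfAlg.mul_congr (S : AssocConfAlg k A) {x x' y y' : A} {l l' : k}
    (hx : x = x') (hy : y = y') (hl : l = l') : S.mul x y l = S.mul x' y' l' := by
  subst hx; subst hy; subst hl; rfl

end AuxLemmas

/-- Proposition 5.3.  Let `A` be an associative conformal algebra.
For any `f ∈ C^m(A, A)`, `g ∈ C^n(A, A)`, `h ∈ C^p(A, A)` with `m, n, p ≥ 1`, the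
following identity of cochains holds:
`(f ⊔ g) • h = (f • h) ⊔ g + (-1)^{m(p-1)} f ⊔ (g • h)`. -/
theorem hochschild_cup_bullet_distrib {k A : Type*} [Field k] [CharZero k]
    [AddCommGroup A] [Module k A] (S : AssocConfAlg k A) (m n p : ℕ)
    (hm : 1 ≤ m) (hn : 1 ≤ n) (hp : 1 ≤ p) (f g h : CMap k A)
    (hf : IsU S.D (m - 1) f) (hg : IsU S.D (n - 1) g) (hh : IsU S.D (p - 1) h) :
    bullet (m + n - 1) (p - 1) (cup S.mul m f g) h
      = cup S.mul (m + p - 1) (bullet (m - 1) (p - 1) f h) g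
        + ((-1 : ℤ) ^ (m * (p - 1))) • cup S.mul m f (bullet (n - 1) (p - 1) g h) := by
  funext lam a
  simp only [bullet, cup, Pi.add_apply, Pi.smul_apply]
  rw [show m + n - 1 + 1 = m + n by omega, show m - 1 + 1 = m by omega,
    show n - 1 + 1 = n by omega, Finset.sum_range_add, S.mul_sum_left, S.mul_sum_right,
    Finset.smul_sum]
  congr 1
  · -- insertions into `f`
    refine Finset.sum_congr rfl fun i hi => ?_
    have hi' : i < m := Finset.mem_range.mp hi
    rw [S.mul_zsmul_left]
    congr 1
    simp only [bulletAt]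
    refine S.mul_congr rfl (congrArg₂ g ?_ ?_) ?_
    · funext r
      beta_reduce
      rw [if_neg (show ¬ r + m < i by omega), if_neg (show ¬ r + m = i by omega)]
      congr 1
      omega
    · funext r
      beta_reduce
      rw [if_neg (show ¬ r + m < i by omega), if_neg (show ¬ r + m = i by omega)]
      congr 1
      omega
    · -- the λ-sum
      obtain ⟨M, rfl⟩ : ∃ M, m = i + 1 + M := ⟨m - i - 1, by omega⟩
      rw [show i + 1 + M + p - 1 = i + (p - 1 + 1) + M by omega]
      refine key_sum _ lam i (p - 1 + 1) M (fun j hj => ?_) ?_ (fun t => ?_)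
      · simp only [if_pos hj]
      · simp
      · rw [if_neg (show ¬ i + 1 + t < i by omega), if_neg (show ¬ i + 1 + t = i by omega)]
        congr 1
        omega
  · -- insertions into `g`
    refine Finset.sum_congr rfl fun j hj => ?_
    have hj' : j < n := Finset.mem_range.mp hj
    rw [S.mul_zsmul_right, smul_smul, ← pow_add,
      show m * (p - 1) + (p - 1) * j = (p - 1) * (m + j) by ring]
    congr 1
    simp only [bulletAt]
    refine S.mul_congr ?_ (congrArg₂ g ?_ ?_) ?_
    · -- `f` sees unchanged arguments
      refine hf.depends _ _ _ _ (fun r hr => ?_) (fun r hr => ?_)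
      · rw [if_pos (show r < m + j by omega)]
      · rw [if_pos (show r < m + j by omega)]
    · funext t
      beta_reduce
      rcases lt_trichotomy t j with ht | ht | ht
      · rw [if_pos (show t + m < m + j by omega), if_pos ht]
      · subst ht
        rw [if_neg (show ¬ t + m < m + t by omega), if_pos (show t + m = m + t by omega),
          if_neg (lt_irrefl t), if_pos rfl]
        refine Finset.sum_congr rfl fun s _ => ?_
        congr 1
        omega
      · rw [if_neg (show ¬ t + m < m + j by omega), if_neg (show ¬ t + m = m + j by omega),
          if_neg (show ¬ t < j by omega), if_neg (show ¬ t = j by omega)]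
        congr 1
        omega
    · funext t
      beta_reduce
      rcases lt_trichotomy t j with ht | ht | ht
      · rw [if_pos (show t + m < m + j by omega), if_pos ht]
      · subst ht
        rw [if_neg (show ¬ t + m < m + t by omega), if_pos (show t + m = m + t by omega),
          if_neg (lt_irrefl t), if_pos rfl]
        refine congrArg₂ h ?_ ?_
        · funext s; congr 1; omega
        · funext s; congr 1; omega
      · rw [if_neg (show ¬ t + m < m + j by omega), if_neg (show ¬ t + m = m + j by omega),
          if_neg (show ¬ t < j by omega), if_neg (show ¬ t = j by omega)]
        congr 1
        omega
    · -- the λ-sum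
      refine Finset.sum_congr rfl fun r hr => ?_
      beta_reduce
      rw [if_pos (show r < m + j by have := Finset.mem_range.mp hr; omega)]
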